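/- For each integer k ≥ 2, let π(k) be the PageRank vector of Γ(k) for α = 1 − 1/k, and let σ(k) be the PageRank vector of Γ(k) for α = 1 (the vector with σ(k)_A = 1 and all other entries 0). Then the ℓ¹ norm ‖σ(k) − π(k)‖₁ converges to 2 as k → ∞. -/

import Mathlib

/-- Arc relation of the graph `Γ(k)` on vertex indices `0, ..., k+2`, where
vertex `0` is `C1`, vertex `1` is `C2`, vertex `i+1` is `B_i` for `1 ≤ i ≤ k`,
and vertex `k+2` is `A`.  `PRadj k j i` holds iff there is an arc from `j` to `i`. -/
def PRadj (k j i : ℕ) : Prop :=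
  (j = 0 ∧ (i = 0 ∨ i = 1)) ∨
  (j = 1 ∧ (i = 0 ∨ i = 1 ∨ i = 2)) ∨
  (2 ≤ j ∧ j ≤ k + 1 ∧ (i = 0 ∨ i = 1 ∨ i = j + 1)) ∨
  (j = k + 2 ∧ i = k + 2)

instance (k j i : ℕ) : Decidable (PRadj k j i) := by unfold PRadj; infer_instance

/-- Out-degree of vertex `j` in `Γ(k)`:  `deg(C1) = 2`, `deg(A) = 1`, all others `3`. -/
def PRdeg (k j : ℕ) : ℕ := if j = 0 then 2 else if j = k + 2 then 1 else 3

/-- The PageRank matrix `R_α` of `Γ(k)`:  entry `(i, j)` is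
`α / deg(j) + (1 - α)/(k+3)` if there is an arc from `j` to `i`, and `(1 - α)/(k+3)`
otherwise. -/
noncomputable def PRmat (k : ℕ) (α : ℝ) : Matrix (Fin (k + 3)) (Fin (k + 3)) ℝ :=
  fun i j =>
    if PRadj k j.1 i.1 then α / (PRdeg k j.1 : ℝ) + (1 - α) / ((k : ℝ) + 3)
    else (1 - α) / ((k : ℝ) + 3)

/-- `π` is a PageRank vector of `Γ(k)` for jumping parameter `α`:  it has nonnegative
entries summing to `1` and satisfies `R_α π = π`. -/
def IsPageRank (k : ℕ) (α : ℝ) (π : Fin (k + 3) → ℝ) : Prop :=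
  (∀ v, 0 ≤ π v) ∧ (∑ v, π v = 1) ∧ (PRmat k α).mulVec π = π

/-
With jumping parameter `α = 1 - 1/k` every vertex receives the teleportation mass
`c = (1 - α)/(k + 3) = 1/(k(k + 3))`.  Along the chain `C2 → B1 → ⋯ → Bk` each vertex passes on
only a third of its rank, so `π(Bk) ≤ 3c/2 + 3⁻ᵏ`.  The balance equation at the sink,
`(1 - α) π(A) = c + α π(Bk)/3`, then gives `π(A) = O(1/k)`.  As `σ` is the point mass at `A`,
`‖σ - π‖₁ = 2 - 2 π(A) → 2`.
-/

open Filter Finset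

theorem sum_abs_single_sub_eq {ι : Type*} [Fintype ι] [DecidableEq ι] {p : ι → ℝ}
    (hp : ∀ v, 0 ≤ p v) (hsum : ∑ v, p v = 1) (a : ι) :
    ∑ v, |(Pi.single a 1 : ι → ℝ) v - p v| = 2 - 2 * p a := by
  have hpa : p a ≤ 1 := hsum ▸ single_le_sum (fun v _ => hp v) (mem_univ a)
  have hterm : ∀ v,
      |(Pi.single a 1 : ι → ℝ) v - p v| = (Pi.single a (1 - 2 * p a) : ι → ℝ) v + p v := by
    intro v
    rcases eq_or_ne v a with rfl | hv
    · rw [Pi.single_eq_same, Pi.single_eq_same, abs_of_nonneg (by linarith)]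
      ring
    · rw [Pi.single_eq_of_ne hv, Pi.single_eq_of_ne hv, zero_sub, abs_neg, abs_of_nonneg (hp v),
        zero_add]
  rw [Fintype.sum_congr _ _ hterm, sum_add_distrib, sum_pi_single', if_pos (mem_univ a),
    hsum]
  ring

theorem le_div_one_sub_add_pow_mul_of_le_add_mul {x : ℕ → ℝ} {c r : ℝ} {n : ℕ} (hc : 0 ≤ c)
    (hr0 : 0 ≤ r) (hr1 : r < 1) (h : ∀ m < n, x (m + 1) ≤ c + r * x m) :
    x n ≤ c / (1 - r) + r ^ n * x 0 := by
  induction n with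
  | zero =>
    simpa using div_nonneg hc (sub_nonneg.2 hr1.le)
  | succ n ih =>
    have hn := ih fun m hm => h m (by omega)
    calc x (n + 1) ≤ c + r * x n := h n n.lt_succ_self
      _ ≤ c + r * (c / (1 - r) + r ^ n * x 0) := by gcongr
      _ = c / (1 - r) + r ^ (n + 1) * x 0 := by
        field_simp [(sub_pos.2 hr1).ne']
        ring

noncomputable def PRinflow (k : ℕ) (π : Fin (k + 3) → ℝ) (i : Fin (k + 3)) : ℝ :=
  ∑ j, if PRadj k j.1 i.1 then π j / PRdeg k j.1 else 0

theorem PRmat_mulVec_apply (k : ℕ) (α : ℝ) (π : Fin (k + 3) → ℝ) (i : Fin (k + 3)) :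
    (PRmat k α).mulVec π i = (1 - α) / (k + 3) * ∑ j, π j + α * PRinflow k π i := by
  simp only [Matrix.mulVec, dotProduct, PRinflow, mul_sum, ← sum_add_distrib]
  refine sum_congr rfl fun j _ => ?_
  simp only [PRmat]
  split_ifs <;> ring

/- Vertex `m + 1` is `B m`; its only in-neighbour is `m` (that is `C2` or `B (m - 1)`), of
out-degree 3. -/
theorem PRinflow_chain (k : ℕ) (π : Fin (k + 3) → ℝ) {m : ℕ} (hm : 1 ≤ m) (hmk : m ≤ k) :
    PRinflow k π ⟨m + 1, by omega⟩ = π ⟨m, by omega⟩ / 3 := by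
  rw [PRinflow, Fintype.sum_eq_single ⟨m, by omega⟩]
  · have hadj : PRadj k m (m + 1) := by unfold PRadj; omega
    have hdeg : PRdeg k m = 3 := by unfold PRdeg; split_ifs <;> omega
    simp [hadj, hdeg]
  · rintro ⟨j, hj⟩ hne
    have hadj : ¬ PRadj k j (m + 1) := by
      unfold PRadj; simp only [ne_eq, Fin.mk.injEq] at hne; omega
    simp [hadj]

theorem PRinflow_sink (k : ℕ) (π : Fin (k + 3) → ℝ) :
    PRinflow k π (Fin.last (k + 2)) = π ⟨k + 1, by omega⟩ / 3 + π (Fin.last (k + 2)) := by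
  rw [PRinflow, Fintype.sum_eq_add ⟨k + 1, by omega⟩ (Fin.last (k + 2))]
  · have hadjB : PRadj k (k + 1) (k + 2) := by unfold PRadj; omega
    have hadjA : PRadj k (k + 2) (k + 2) := by unfold PRadj; omega
    simp [hadjB, hadjA, PRdeg]
  · simp [Fin.ext_iff]
  · rintro ⟨j, hj⟩ ⟨hB, hA⟩
    have hadj : ¬ PRadj k j (k + 2) := by
      unfold PRadj; simp only [ne_eq, Fin.ext_iff, Fin.val_last] at hB hA; omega
    simp [hadj]

namespace IsPageRank

variable {k : ℕ} {α : ℝ} {π : Fin (k + 3) → ℝ}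

theorem le_one (h : IsPageRank k α π) (v : Fin (k + 3)) : π v ≤ 1 :=
  h.2.1 ▸ single_le_sum (fun w _ => h.1 w) (mem_univ v)

theorem apply_eq (h : IsPageRank k α π) (i : Fin (k + 3)) :
    π i = (1 - α) / (k + 3) + α * PRinflow k π i := by
  rw [← congrFun h.2.2 i, PRmat_mulVec_apply, h.2.1, mul_one]

theorem last_chain_le (h : IsPageRank k α π) (hα1 : α ≤ 1) :
    π ⟨k + 1, by omega⟩ ≤ 3 / 2 * ((1 - α) / (k + 3)) + (1 / 3) ^ k := by
  set c := (1 - α) / (k + 3)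
  have hc : 0 ≤ c := div_nonneg (by linarith) (by positivity)
  -- the PageRank of `C2, B 1, …, B k`, padded with zeros
  let x : ℕ → ℝ := fun m => if hm : m + 1 < k + 3 then π ⟨m + 1, hm⟩ else 0
  have hstep : ∀ m < k, x (m + 1) ≤ c + 1 / 3 * x m := by
    intro m hm
    have hrec := h.apply_eq ⟨m + 1 + 1, by omega⟩
    rw [PRinflow_chain k π (by omega) (by omega)] at hrec
    have hnn := h.1 ⟨m + 1, by omega⟩
    simp only [x, dif_pos (show m + 1 + 1 < k + 3 by omega), dif_pos (show m + 1 < k + 3 by omega)]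
    nlinarith
  have hx := le_div_one_sub_add_pow_mul_of_le_add_mul hc (by norm_num) (by norm_num) hstep
  simp only [x, dif_pos (show k + 1 < k + 3 by omega), dif_pos (show 0 + 1 < k + 3 by omega)] at hx
  have hdecay := mul_le_mul_of_nonneg_left (h.le_one ⟨0 + 1, by omega⟩)
    (by positivity : (0 : ℝ) ≤ (1 / 3) ^ k)
  have hgeom : c / (1 - 1 / 3) = 3 / 2 * c := by ring
  linarith

theorem sink_le (hk : 0 < k) (h : IsPageRank k (1 - 1 / k) π) :
    π (Fin.last (k + 2)) ≤ 2 / k + k * (1 / 3) ^ k := by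
  have hk' : (1 : ℝ) ≤ k := by exact_mod_cast hk
  have hB := h.last_chain_le (sub_le_self _ (by positivity))
  rw [sub_sub_cancel] at hB
  have hA := h.apply_eq (Fin.last (k + 2))
  rw [PRinflow_sink] at hA
  set a := π (Fin.last (k + 2))
  set b := π ⟨k + 1, by omega⟩
  have ha : a = 1 / (k + 3) + (k - 1) / 3 * b := by
    field_simp at hA ⊢
    linarith
  have hq : (0 : ℝ) ≤ (1 / 3) ^ k := by positivity
  calc a = 1 / (k + 3) + (k - 1) / 3 * b := ha
    _ ≤ 1 / (k + 3) + (k - 1) / 3 * (3 / 2 * (1 / k / (k + 3)) + (1 / 3) ^ k) := by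
      gcongr
    _ = (3 * k - 1) / (2 * k * (k + 3)) + (k - 1) / 3 * (1 / 3) ^ k := by
      field_simp
      ring
    _ ≤ 2 / k + k * (1 / 3) ^ k := by
      gcongr ?_ + ?_
      · rw [div_le_div_iff₀ (by positivity) (by positivity)]
        nlinarith
      · exact mul_le_mul_of_nonneg_right (by linarith) hq

end IsPageRank

/-- If `π k` is the PageRank vector of `Γ(k)` for `α = 1 - 1/k` and `σ k` is the
PageRank vector of `Γ(k)` for `α = 1` (value `1` at `A`, `0` elsewhere), then
`‖σ(k) - π(k)‖₁ → 2` as `k → ∞`. -/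
theorem pagerank_diff_l1_norm_tendsto (π : ∀ k : ℕ, Fin (k + 3) → ℝ)
    (hπ : ∀ k, 2 ≤ k → IsPageRank k (1 - 1 / (k : ℝ)) (π k))
    (σ : ∀ k : ℕ, Fin (k + 3) → ℝ)
    (hσ : ∀ k, σ k = fun v => if v.1 = k + 2 then (1 : ℝ) else 0) :
    Filter.Tendsto (fun k : ℕ => ∑ v, |σ k v - π k v|)
      Filter.atTop (nhds 2) := by
  have hσ_single : ∀ k, σ k = Pi.single (Fin.last (k + 2)) 1 := by
    intro k
    ext v
    simp [hσ, Pi.single_apply, Fin.ext_iff]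
  have hsink : Tendsto (fun k => π k (Fin.last (k + 2))) atTop (nhds 0) := by
    have hbound : Tendsto (fun k : ℕ => 2 / (k : ℝ) + k * (1 / 3) ^ k) atTop (nhds 0) := by
      simpa using (tendsto_const_div_atTop_nhds_zero_nat 2).add
        (tendsto_self_mul_const_pow_of_lt_one (r := 1 / 3) (by norm_num) (by norm_num))
    refine squeeze_zero' ?_ ?_ hbound <;> filter_upwards [eventually_ge_atTop 2] with k hk
    · exact (hπ k hk).1 _
    · exact (hπ k hk).sink_le (by omega)
  have hlim : Tendsto (fun k => 2 - 2 * π k (Fin.last (k + 2))) atTop (nhds 2) := by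
    simpa using (hsink.const_mul 2).const_sub 2
  refine hlim.congr' ?_
  filter_upwards [eventually_ge_atTop 2] with k hk
  rw [hσ_single, sum_abs_single_sub_eq (hπ k hk).1 (hπ k hk).2.1]
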